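/- Let θ ∈ ℝ^d with θ_d ≠ 0 and B = B(θ) the companion matrix, and suppose I_d − B^{-1} is invertible. Then ∑_{i=1}^{d} θ_i ≠ 1 and the d-th column of (I_d − B^{-1})^{-1} equals (θ_d / (∑_{i=1}^{d} θ_i − 1)) · (1,1,...,1)ᵀ. -/

import Mathlib

/-!
For the companion matrix `B`, `(B - 1) 𝟙 = (∑ θ - 1) e₀` and `B e_d = θ_d e₀`, while
`1 - B⁻¹ = B⁻¹ (B - 1)`. So if `∑ θ = 1` then `1 - B⁻¹` kills `𝟙`, and otherwise it maps
`c 𝟙` with `c = θ_d / (∑ θ - 1)` to `B⁻¹ (θ_d e₀) = e_d`, which is the last column of its inverse.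
-/

open Matrix

namespace Matrix

section Companion

variable {R : Type*} {n : ℕ}

def companion [Zero R] [One R] (θ : Fin (n + 1) → R) : Matrix (Fin (n + 1)) (Fin (n + 1)) R :=
  of fun i j => if i = 0 then θ j else if (i : ℕ) = (j : ℕ) + 1 then 1 else 0

@[simp]
lemma companion_zero_apply [Zero R] [One R] (θ : Fin (n + 1) → R) (j : Fin (n + 1)) :
    companion θ 0 j = θ j := by
  simp [companion]

lemma companion_succ_apply [Zero R] [One R] (θ : Fin (n + 1) → R) (i : Fin n) (j : Fin (n + 1)) :
    companion θ i.succ j = (Pi.single i.castSucc 1 : Fin (n + 1) → R) j := by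
  rw [companion, of_apply, if_neg i.succ_ne_zero, Pi.single_apply]
  simp only [Fin.ext_iff, Fin.val_succ, Fin.val_castSucc, add_left_inj, eq_comm]

lemma companion_mulVec [NonAssocSemiring R] (θ v : Fin (n + 1) → R) :
    companion θ *ᵥ v = Fin.cons (θ ⬝ᵥ v) (v ∘ Fin.castSucc) := by
  ext i
  cases i using Fin.cases with
  | zero => simp [mulVec, dotProduct]
  | succ i => simp [mulVec, companion_succ_apply]

lemma companion_col_last [Zero R] [One R] (θ : Fin (n + 1) → R) :
    (companion θ).col (Fin.last n) = Pi.single 0 (θ (Fin.last n)) := by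
  ext i
  cases i using Fin.cases with
  | zero => simp
  | succ i => simp [companion_succ_apply, (Fin.castSucc_lt_last i).ne']

lemma companion_sub_one_mulVec_const [Ring R] (θ : Fin (n + 1) → R) (c : R) :
    (companion θ - 1) *ᵥ (fun _ => c) = Pi.single 0 ((∑ i, θ i - 1) * c) := by
  ext i
  cases i using Fin.cases with
  | zero => simp [sub_mulVec, companion_mulVec, dotProduct, Finset.sum_mul, sub_mul]
  | succ i => simp [sub_mulVec, companion_mulVec]

lemma det_companion [CommRing R] (θ : Fin (n + 1) → R) :
    (companion θ).det = (-1) ^ n * θ (Fin.last n) := by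
  have hminor : (companion θ).submatrix Fin.succ Fin.castSucc = 1 := by
    ext i j
    simp [companion_succ_apply, one_apply, Pi.single_apply, eq_comm]
  have hcol (i : Fin (n + 1)) :
      companion θ i (Fin.last n) = (Pi.single 0 (θ (Fin.last n)) : Fin (n + 1) → R) i :=
    congrFun (companion_col_last θ) i
  rw [det_succ_column _ (Fin.last n), Fintype.sum_eq_single 0]
  · simp [hcol, hminor]
  · intro i hi
    simp [hcol, hi]

end Companion

lemma one_sub_inv_mulVec {m R : Type*} [Fintype m] [DecidableEq m] [CommRing R] {A : Matrix m m R}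
    (hA : IsUnit A.det) (v : m → R) : (1 - A⁻¹) *ᵥ v = A⁻¹ *ᵥ ((A - 1) *ᵥ v) := by
  rw [mulVec_mulVec, Matrix.mul_sub, nonsing_inv_mul _ hA, Matrix.mul_one]

lemma inv_apply_eq_of_mulVec_eq_single {m R : Type*} [Fintype m] [DecidableEq m] [CommRing R]
    {A : Matrix m m R} (hA : IsUnit A) {v : m → R} {j : m} (hv : A *ᵥ v = Pi.single j 1) (i : m) :
    A⁻¹ i j = v i := by
  rw [← col_apply A⁻¹ j i, ← mulVec_single_one, ← hv, mulVec_mulVec,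
    nonsing_inv_mul _ ((isUnit_iff_isUnit_det A).1 hA), one_mulVec]

end Matrix

/-- if `I_d - B⁻¹` is invertible then `∑ θ_i ≠ 1` and the `d`-th
column of `(I_d - B⁻¹)⁻¹` equals `(θ_d / (∑ θ_i - 1)) (1,…,1)ᵀ` (`d = n+1`). -/
theorem companion_one_sub_inv_last_col (n : ℕ) (θ : Fin (n+1) → ℝ)
    (hθ : θ (Fin.last n) ≠ 0)
    (B : Matrix (Fin (n+1)) (Fin (n+1)) ℝ)
    (hB : ∀ i j : Fin (n+1),
      B i j = if i = 0 then θ j else if (i : ℕ) = (j : ℕ) + 1 then 1 else 0)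
    (hinv : IsUnit ((1 : Matrix (Fin (n+1)) (Fin (n+1)) ℝ) - B⁻¹)) :
    (∑ i, θ i) ≠ 1 ∧
      ∀ i : Fin (n+1),
        ((1 : Matrix (Fin (n+1)) (Fin (n+1)) ℝ) - B⁻¹)⁻¹ i (Fin.last n)
          = θ (Fin.last n) / ((∑ i, θ i) - 1) := by
  obtain rfl : B = companion θ := Matrix.ext hB
  have hdet : IsUnit (companion θ).det := by simp [det_companion, hθ]
  have hconst (c : ℝ) : (1 - (companion θ)⁻¹) *ᵥ (fun _ => c) =
      (companion θ)⁻¹ *ᵥ Pi.single 0 ((∑ i, θ i - 1) * c) := by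
    rw [one_sub_inv_mulVec hdet, companion_sub_one_mulVec_const]
  have hsum : ∑ i, θ i ≠ 1 := by
    intro h
    have hker : (1 - (companion θ)⁻¹) *ᵥ (fun _ => 1) = (1 - (companion θ)⁻¹) *ᵥ 0 := by
      simp [hconst, h]
    exact one_ne_zero (congrFun (mulVec_injective_of_isUnit hinv hker) 0)
  refine ⟨hsum, inv_apply_eq_of_mulVec_eq_single hinv ?_⟩
  rw [hconst, mul_div_cancel₀ _ (sub_ne_zero.2 hsum), ← companion_col_last, ← mulVec_single_one,
    mulVec_mulVec, nonsing_inv_mul _ hdet, one_mulVec]
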